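/- For all integers j ≥ 2, c_j = 2 Σ_{j1+j2=j} b_{j1} b_{j2} satisfies c_2 = 2 and the recursion implied by (combining identities): c_j - 2(j-1) a_{j-1} = 2 Σ_{j1+j2=j-1} a_{j1} c_{j2}. -/

import Mathlib

def a (j : ℕ) : ℚ :=
  (Nat.factorial (2 * j) : ℚ) / ((Nat.factorial j : ℚ) * (Nat.factorial (j + 1) : ℚ))

def b (j : ℕ) : ℚ :=
  if j = 0 then 0 else (2 * (j : ℚ) - 1) * a (j - 1)

def c (j : ℕ) : ℚ :=
  2 * ∑ p ∈ Finset.HasAntidiagonal.antidiagonal j, b p.1 * b p.2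

/-!
Write `B n = centralBinom n` and `C n = catalan n`. Then `a j = C j` and `2 b j = B j` for
`j ≥ 1`, so the classical convolution `∑_{i+k=n} B i B k = 4 ^ n` gives the closed form
`2 c j = 4 ^ j - 2 B j` for `j ≥ 1`. Substituting it, the right-hand side of the recursion becomes
a combination of the convolutions of `C` with `4 ^ k` and with `B k`, both of which are again
central binomial coefficients, and what is left is `B (n + 1) = 2 (2n + 1) C n`.
-/

open Finset Nat

section
variable {R : Type*} [CommSemiring R]

theorem two_mul_sum_antidiagonal_mul_snd_mul (f : ℕ → R) (n : ℕ) :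
    2 * ∑ p ∈ antidiagonal n, f p.1 * (p.2 * f p.2) = n * ∑ p ∈ antidiagonal n, f p.1 * f p.2 := by
  rw [two_mul]
  nth_rw 1 [← sum_antidiagonal_swap]
  rw [← sum_add_distrib, mul_sum]
  refine sum_congr rfl fun p hp => ?_
  rw [← mem_antidiagonal.mp hp, Prod.fst_swap, Prod.snd_swap]
  push_cast
  ring

theorem sum_antidiagonal_mul_ite_snd_eq_zero (f : ℕ → R) (n : ℕ) :
    ∑ p ∈ antidiagonal n, f p.1 * (if p.2 = 0 then 1 else 0) = f n := by
  cases n with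
  | zero => simp
  | succ n => simp [sum_antidiagonal_succ']

theorem sum_antidiagonal_ite_fst_eq_zero_mul (f : ℕ → R) (n : ℕ) :
    ∑ p ∈ antidiagonal n, (if p.1 = 0 then 1 else 0) * f p.2 = f n := by
  rw [← sum_antidiagonal_swap]
  simpa [mul_comm] using sum_antidiagonal_mul_ite_snd_eq_zero f n

end

theorem centralBinom_succ_eq_mul_catalan (n : ℕ) :
    (n + 1).centralBinom = 2 * (2 * n + 1) * catalan n := by
  apply Nat.eq_of_mul_eq_mul_left (n.succ_pos : 0 < n + 1)
  rw [succ_mul_centralBinom_succ, ← succ_mul_catalan_eq_centralBinom, Nat.succ_eq_add_one]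
  ring

theorem sum_antidiagonal_centralBinom_mul_centralBinom (n : ℕ) :
    ∑ p ∈ antidiagonal n, p.1.centralBinom * p.2.centralBinom = 4 ^ n := by
  induction n with
  | zero => simp
  | succ n ih =>
    have hsymm := two_mul_sum_antidiagonal_mul_snd_mul centralBinom
    simp only [Nat.cast_id] at hsymm
    -- coefficientwise, `(1 - 4x) G' = 2 G` for `G = ∑ B n xⁿ` forces `(1 - 4x) G² = 1`
    apply Nat.eq_of_mul_eq_mul_left n.succ_pos
    calc (n + 1) * ∑ p ∈ antidiagonal (n + 1), p.1.centralBinom * p.2.centralBinom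
        = 2 * ∑ p ∈ antidiagonal (n + 1), p.1.centralBinom * (p.2 * p.2.centralBinom) :=
          (hsymm _).symm
      _ = 2 * ∑ p ∈ antidiagonal n, p.1.centralBinom * ((p.2 + 1) * (p.2 + 1).centralBinom) := by
          rw [sum_antidiagonal_succ']; simp
      _ = 4 * (2 * ∑ p ∈ antidiagonal n, p.1.centralBinom * (p.2 * p.2.centralBinom))
            + 4 * ∑ p ∈ antidiagonal n, p.1.centralBinom * p.2.centralBinom := by
          simp only [succ_mul_centralBinom_succ, mul_sum, ← sum_add_distrib]
          exact sum_congr rfl fun p _ => by ring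
      _ = (n + 1) * 4 ^ (n + 1) := by rw [hsymm, ih]; ring

theorem two_mul_sum_antidiagonal_catalan_mul_centralBinom (n : ℕ) :
    2 * ∑ p ∈ antidiagonal n, catalan p.1 * p.2.centralBinom = (n + 1).centralBinom := by
  have hsymm := two_mul_sum_antidiagonal_mul_snd_mul catalan n
  simp only [Nat.cast_id] at hsymm
  calc 2 * ∑ p ∈ antidiagonal n, catalan p.1 * p.2.centralBinom
      = 2 * ∑ p ∈ antidiagonal n, catalan p.1 * (p.2 * catalan p.2)
          + 2 * ∑ p ∈ antidiagonal n, catalan p.1 * catalan p.2 := by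
        simp only [← succ_mul_catalan_eq_centralBinom, ← mul_add, ← sum_add_distrib]
        exact congrArg _ (sum_congr rfl fun p _ => by ring)
    _ = (n + 1).centralBinom := by
        rw [hsymm, ← catalan_succ', ← succ_mul_catalan_eq_centralBinom]; ring

theorem two_mul_sum_antidiagonal_catalan_mul_four_pow_add_centralBinom (n : ℕ) :
    2 * ∑ p ∈ antidiagonal n, catalan p.1 * 4 ^ p.2 + (n + 1).centralBinom = 4 ^ (n + 1) := by
  induction n with
  | zero => simp [centralBinom, Nat.choose]
  | succ n ih =>
    have hB : (n + 2).centralBinom + 2 * catalan (n + 1) = 4 * (n + 1).centralBinom := by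
      rw [centralBinom_succ_eq_mul_catalan, ← succ_mul_catalan_eq_centralBinom]; ring
    calc 2 * ∑ p ∈ antidiagonal (n + 1), catalan p.1 * 4 ^ p.2 + (n + 2).centralBinom
        = 4 * (2 * ∑ p ∈ antidiagonal n, catalan p.1 * 4 ^ p.2 + (n + 1).centralBinom) := by
          have hshift : ∑ p ∈ antidiagonal n, catalan p.1 * 4 ^ (p.2 + 1)
              = 4 * ∑ p ∈ antidiagonal n, catalan p.1 * 4 ^ p.2 := by
            rw [mul_sum]; exact sum_congr rfl fun p _ => by ring
          rw [sum_antidiagonal_succ', hshift, pow_zero, mul_one]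
          linarith
      _ = 4 ^ (n + 2) := by rw [ih]; ring

theorem a_eq_catalan (j : ℕ) : a j = catalan j := by
  have hfact : (2 * j)! = catalan j * (j ! * (j + 1)!) := by
    rw [← choose_mul_factorial_mul_factorial (by omega : j ≤ 2 * j), show 2 * j - j = j by omega,
      ← centralBinom_eq_two_mul_choose, ← succ_mul_catalan_eq_centralBinom, factorial_succ]
    ring
  rw [a, hfact]
  push_cast
  field_simp

theorem two_mul_b (k : ℕ) : 2 * b k = k.centralBinom - if k = 0 then 1 else 0 := by
  cases k with
  | zero => simp [b]
  | succ k =>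
    rw [b, if_neg k.succ_ne_zero, if_neg k.succ_ne_zero, centralBinom_succ_eq_mul_catalan,
      add_tsub_cancel_right, a_eq_catalan]
    push_cast
    ring

theorem two_mul_c (k : ℕ) : 2 * c k = 4 ^ k - 2 * k.centralBinom + if k = 0 then 1 else 0 := by
  set δ : ℕ → ℚ := fun k => if k = 0 then 1 else 0 with hδ
  have hV : ∑ p ∈ antidiagonal k, (p.1.centralBinom : ℚ) * p.2.centralBinom = 4 ^ k := by
    exact_mod_cast sum_antidiagonal_centralBinom_mul_centralBinom k
  calc 2 * c k = ∑ p ∈ antidiagonal k, (2 * b p.1) * (2 * b p.2) := by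
        rw [c, ← mul_assoc, mul_sum]; exact sum_congr rfl fun p _ => by ring
    _ = ∑ p ∈ antidiagonal k, ((p.1.centralBinom : ℚ) - δ p.1) * (p.2.centralBinom - δ p.2) := by
        simp only [two_mul_b, hδ]
    _ = ∑ p ∈ antidiagonal k, (p.1.centralBinom : ℚ) * p.2.centralBinom
          - ∑ p ∈ antidiagonal k, (p.1.centralBinom : ℚ) * δ p.2
          - ∑ p ∈ antidiagonal k, δ p.1 * p.2.centralBinom
          + ∑ p ∈ antidiagonal k, δ p.1 * δ p.2 := by
        rw [← sum_sub_distrib, ← sum_sub_distrib, ← sum_add_distrib]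
        exact sum_congr rfl fun p _ => by ring
    _ = 4 ^ k - 2 * k.centralBinom + δ k := by
        simp only [hδ]
        rw [hV, sum_antidiagonal_mul_ite_snd_eq_zero (fun i => (i.centralBinom : ℚ)),
          sum_antidiagonal_ite_fst_eq_zero_mul (fun i => (i.centralBinom : ℚ)),
          sum_antidiagonal_mul_ite_snd_eq_zero (fun i => if i = 0 then (1 : ℚ) else 0)]
        ring

theorem c_recursion :
    c 2 = 2 ∧
    ∀ j : ℕ, 2 ≤ j →
      c j - 2 * ((j : ℚ) - 1) * a (j - 1) =
        2 * ∑ p ∈ Finset.HasAntidiagonal.antidiagonal (j - 1), a p.1 * c p.2 := by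
  constructor
  · have h := two_mul_c 2
    norm_num [centralBinom, Nat.choose] at h
    linarith
  · intro j hj
    obtain ⟨n, rfl⟩ : ∃ n, j = n + 2 := ⟨j - 2, by omega⟩
    have hc := two_mul_c (n + 2)
    have hcat : ((n + 2).centralBinom : ℚ) = 2 * (2 * (n + 1) + 1) * catalan (n + 1) := by
      exact_mod_cast centralBinom_succ_eq_mul_catalan (n + 1)
    have hfour : 2 * ∑ p ∈ antidiagonal (n + 1), (catalan p.1 : ℚ) * 4 ^ p.2
        + (n + 2).centralBinom = 4 ^ (n + 2) := by
      exact_mod_cast two_mul_sum_antidiagonal_catalan_mul_four_pow_add_centralBinom (n + 1)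
    have hbinom : 2 * ∑ p ∈ antidiagonal (n + 1), (catalan p.1 : ℚ) * p.2.centralBinom
        = (n + 2).centralBinom := by
      exact_mod_cast two_mul_sum_antidiagonal_catalan_mul_centralBinom (n + 1)
    have hδ := sum_antidiagonal_mul_ite_snd_eq_zero (fun k => (catalan k : ℚ)) (n + 1)
    have hsum : 2 * ∑ p ∈ antidiagonal (n + 1), a p.1 * c p.2
        = ∑ p ∈ antidiagonal (n + 1), (catalan p.1 : ℚ) * 4 ^ p.2
          - 2 * ∑ p ∈ antidiagonal (n + 1), (catalan p.1 : ℚ) * p.2.centralBinom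
          + ∑ p ∈ antidiagonal (n + 1), (catalan p.1 : ℚ) * if p.2 = 0 then 1 else 0 := by
      rw [mul_sum, mul_sum, ← sum_sub_distrib, ← sum_add_distrib]
      refine sum_congr rfl fun p _ => ?_
      rw [a_eq_catalan, ← mul_assoc, mul_comm 2, mul_assoc, two_mul_c]
      ring
    rw [show n + 2 - 1 = n + 1 by omega, hsum, hδ, a_eq_catalan]
    push_cast at hc ⊢
    linear_combination hc / 2 - hfour / 2 + hbinom + hcat / 2
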